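/- The nondeterministic state complexity of any block language L ⊆ Σ^ℓ over an alphabet of size k is Θ(√(k^ℓ)); more precisely nsc(L) ≤ 2·(k^(⌈ℓ/2⌉+1)−1)/(k−1), and the palindrome language L_{k,ℓ/2} (for even ℓ) requires at least k^(ℓ/2) states in any NFA accepting it. -/

import Mathlib

/-!
A word of length at most `2m + 1` splits as `p ++ a :: s` with `|p|, |s| ≤ m`, or has length at
most `m`. An NFA whose states are the prefixes `p` read so far and the suffixes `s` still to be
read guesses the split while reading the middle letter `a`, so two copies of the lists of length
at most `m` suffice as states; for `k ≥ 2` letters there are `(k ^ (m + 1) - 1) / (k - 1)` of them.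

For the lower bound, the pairs `(w, reverse w)` with `|w| = d` form a fooling set for the
palindromes: `w ++ reverse v` has the form `u ++ reverse u` with `|u| = d` only if `v = w`, so the
intermediate states of accepting runs on the `k ^ d` words `w ++ reverse w` are pairwise distinct.
-/

/-- Nondeterministic state complexity: the minimal number of states of an NFA accepting `L`. -/
noncomputable def nsc {α : Type} (L : Language α) : ℕ :=
  sInf {n | ∃ M : NFA α (Fin n), M.accepts = L}

/-- The block language of palindromes of length `2 * d`. -/
def palLang (α : Type*) (d : ℕ) : Set (List α) :=
  {u | ∃ w : List α, w.length = d ∧ u = w ++ w.reverse}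

namespace NFA

variable {α σ τ : Type*}

def reindex (g : σ ≃ τ) (M : NFA α σ) : NFA α τ where
  step t a := g.symm ⁻¹' M.step (g.symm t) a
  start := g.symm ⁻¹' M.start
  accept := g.symm ⁻¹' M.accept

theorem stepSet_reindex (g : σ ≃ τ) (M : NFA α σ) (S : Set σ) (a : α) :
    (M.reindex g).stepSet (g.symm ⁻¹' S) a = g.symm ⁻¹' M.stepSet S a := by
  ext t
  simp only [mem_stepSet, Set.mem_preimage, reindex]
  exact g.symm.exists_congr_left.trans (by simp)

theorem evalFrom_reindex (g : σ ≃ τ) (M : NFA α σ) (S : Set σ) (x : List α) :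
    (M.reindex g).evalFrom (g.symm ⁻¹' S) x = g.symm ⁻¹' M.evalFrom S x := by
  induction x generalizing S with
  | nil => rfl
  | cons a x ih => simp only [evalFrom_cons, stepSet_reindex, ih]

@[simp]
theorem accepts_reindex (g : σ ≃ τ) (M : NFA α σ) : (M.reindex g).accepts = M.accepts := by
  ext x
  change (∃ t ∈ g.symm ⁻¹' M.accept, t ∈ (M.reindex g).evalFrom (g.symm ⁻¹' M.start) x) ↔ _
  rw [evalFrom_reindex]
  exact g.symm.exists_congr_left.trans (by simp [mem_accepts])

theorem mem_acceptsFrom_iff_exists (M : NFA α σ) {S : Set σ} {x : List α} :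
    x ∈ M.acceptsFrom S ↔ ∃ s ∈ S, x ∈ M.acceptsFrom {s} := by
  simp only [mem_acceptsFrom, mem_evalFrom_iff_exists (S := S)]
  tauto

theorem cons_mem_acceptsFrom_singleton (M : NFA α σ) {s : σ} {a : α} {x : List α} :
    a :: x ∈ M.acceptsFrom {s} ↔ ∃ t ∈ M.step s a, x ∈ M.acceptsFrom {t} := by
  rw [cons_mem_acceptsFrom, stepSet_singleton, mem_acceptsFrom_iff_exists]

theorem natCard_le_of_fooling {ι : Type*} [Finite σ] (M : NFA α σ) (x y : ι → List α)
    (hmem : ∀ i, x i ++ y i ∈ M.accepts)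
    (hfool : ∀ i j, x i ++ y j ∈ M.accepts → x j ++ y i ∈ M.accepts → i = j) :
    Nat.card ι ≤ Nat.card σ := by
  have hmid : ∀ i, ∃ s ∈ M.evalFrom M.start (x i), y i ∈ M.acceptsFrom {s} := fun i =>
    M.mem_acceptsFrom_iff_exists.mp ((M.append_mem_acceptsFrom).mp (hmem i))
  choose s hxs hsy using hmid
  have hcross : ∀ i j, s i = s j → x i ++ y j ∈ M.accepts := fun i j hij =>
    (M.append_mem_acceptsFrom).mpr (M.mem_acceptsFrom_iff_exists.mpr ⟨s i, hxs i, hij ▸ hsy j⟩)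
  exact Nat.card_le_card_of_injective s fun i j hij =>
    hfool i j (hcross i j hij) (hcross j i hij.symm)

end NFA

theorem nsc_accepts_le_natCard {α σ : Type} [Finite σ] (M : NFA α σ) :
    nsc M.accepts ≤ Nat.card σ :=
  Nat.sInf_le ⟨M.reindex (Finite.equivFin σ), M.accepts_reindex _⟩

abbrev BoundedList (α : Type*) (m : ℕ) : Type _ := {l : List α // l.length ≤ m}

namespace BoundedList

variable {α : Type*} {m : ℕ}

def nil : BoundedList α m := ⟨[], Nat.zero_le m⟩

@[simp]
theorem coe_nil : (nil : BoundedList α m).1 = [] := rfl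

def equivSigmaVector : BoundedList α m ≃ Σ i : Fin (m + 1), List.Vector α i where
  toFun l := ⟨⟨l.1.length, Nat.lt_succ_of_le l.2⟩, ⟨l.1, rfl⟩⟩
  invFun v := ⟨v.2.1, v.2.2.trans_le (Nat.le_of_lt_succ v.1.2)⟩
  left_inv _ := rfl
  right_inv v := Sigma.subtype_ext (Fin.ext v.2.2) rfl

instance [Finite α] : Finite (BoundedList α m) :=
  (List.finite_length_le α m).to_subtype

theorem natCard_eq [Finite α] :
    Nat.card (BoundedList α m) = ∑ i ∈ Finset.range (m + 1), Nat.card α ^ i := by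
  rw [Nat.card_congr equivSigmaVector, Nat.card_sigma,
    ← Fin.sum_univ_eq_sum_range (fun i => Nat.card α ^ i)]
  simp [Nat.card_congr (Equiv.vectorEquivFin _ _), Nat.card_fun]

end BoundedList

namespace Language

variable {α : Type*}

open BoundedList in
def prefixSuffixNFA (L : Language α) (m : ℕ) : NFA α (BoundedList α m ⊕ BoundedList α m) where
  step
    | .inl p, a => Sum.inl '' {p' | p'.1 = p.1 ++ [a]} ∪ Sum.inr '' {s | p.1 ++ a :: s.1 ∈ L}
    | .inr s, a => Sum.inr '' {s' | s.1 = a :: s'.1}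
  start := {.inl nil}
  -- accepting prefix states take care of the words of length at most `m`, e.g. the empty word
  accept := {q | Sum.elim (fun p => p.1 ∈ L) (fun s => s.1 = []) q}

variable (L : Language α) (m : ℕ)

@[simp]
theorem prefixSuffixNFA_step_inl (p : BoundedList α m) (a : α) :
    (L.prefixSuffixNFA m).step (.inl p) a =
      Sum.inl '' {p' | p'.1 = p.1 ++ [a]} ∪ Sum.inr '' {s | p.1 ++ a :: s.1 ∈ L} := rfl

@[simp]
theorem prefixSuffixNFA_step_inr (s : BoundedList α m) (a : α) :
    (L.prefixSuffixNFA m).step (.inr s) a = Sum.inr '' {s' | s.1 = a :: s'.1} := rfl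

theorem mem_prefixSuffixNFA_acceptsFrom_inr (s : BoundedList α m) (x : List α) :
    x ∈ (L.prefixSuffixNFA m).acceptsFrom {.inr s} ↔ x = s.1 := by
  induction x generalizing s with
  | nil => simp [prefixSuffixNFA, eq_comm]
  | cons a x ih =>
    simp only [NFA.cons_mem_acceptsFrom_singleton, prefixSuffixNFA_step_inr,
      Set.exists_mem_image, Set.mem_ofPred_eq, ih]
    refine ⟨fun ⟨t, hs, hx⟩ => hx ▸ hs.symm, fun hs => ⟨⟨x, ?_⟩, hs.symm, rfl⟩⟩
    have hs' := s.2
    rw [← hs, List.length_cons] at hs'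
    omega

theorem mem_prefixSuffixNFA_acceptsFrom_inl (p : BoundedList α m) (x : List α) :
    x ∈ (L.prefixSuffixNFA m).acceptsFrom {.inl p} ↔
      p.1 ++ x ∈ L ∧ p.1.length + x.length ≤ 2 * m + 1 := by
  induction x generalizing p with
  | nil => simpa [prefixSuffixNFA] using fun _ => by have := p.2; omega
  | cons a x ih =>
    simp only [NFA.cons_mem_acceptsFrom_singleton, prefixSuffixNFA_step_inl, Set.mem_union,
      or_and_right, exists_or, Set.exists_mem_image, Set.mem_ofPred_eq, ih,
      mem_prefixSuffixNFA_acceptsFrom_inr, List.length_cons]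
    have hp := p.2
    constructor
    · rintro (⟨p', hp', hL, hlen⟩ | ⟨s, hL, rfl⟩)
      · simp only [hp', List.append_assoc, List.singleton_append, List.length_append,
          List.length_singleton] at hL hlen
        exact ⟨hL, by omega⟩
      · exact ⟨hL, by have := s.2; omega⟩
    · rintro ⟨hL, hlen⟩
      by_cases hroom : p.1.length < m
      · left
        exact ⟨⟨p.1 ++ [a], by simp; omega⟩, rfl, by simpa using hL, by simp; omega⟩
      · right
        exact ⟨⟨x, by omega⟩, hL, rfl⟩

theorem mem_prefixSuffixNFA_accepts {x : List α} :
    x ∈ (L.prefixSuffixNFA m).accepts ↔ x ∈ L ∧ x.length ≤ 2 * m + 1 :=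
  (mem_prefixSuffixNFA_acceptsFrom_inl L m .nil x).trans (by simp)

end Language

theorem nsc_le_of_forall_length_le {α : Type} [Finite α] (L : Language α) (m : ℕ)
    (hL : ∀ w ∈ L, w.length ≤ 2 * m + 1) :
    nsc L ≤ 2 * ∑ i ∈ Finset.range (m + 1), Nat.card α ^ i := by
  have hacc : (L.prefixSuffixNFA m).accepts = L := by
    ext w
    rw [Language.mem_prefixSuffixNFA_accepts]
    exact and_iff_left_of_imp (hL w)
  calc nsc L ≤ Nat.card (BoundedList α m ⊕ BoundedList α m) := hacc ▸ nsc_accepts_le_natCard _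
    _ = _ := by rw [Nat.card_sum, BoundedList.natCard_eq, two_mul]

theorem eq_of_append_reverse_mem_palLang {α : Type*} {d : ℕ} {v w : List α}
    (hv : v.length = d) (h : v ++ w.reverse ∈ palLang α d) : v = w := by
  obtain ⟨u, hu, he⟩ := h
  obtain ⟨hvu, hwu⟩ := List.append_inj he (hv.trans hu.symm)
  rw [hvu, List.reverse_injective hwu]

theorem pow_natCard_le_of_accepts_eq_palLang {α σ : Type*} [Finite σ] (d : ℕ) (M : NFA α σ)
    (hM : M.accepts = palLang α d) : Nat.card α ^ d ≤ Nat.card σ := by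
  have hpal : ∀ f g : Fin d → α, List.ofFn f ++ (List.ofFn g).reverse ∈ M.accepts ↔ f = g := by
    refine fun f g => ⟨fun h => ?_, fun h => h ▸ hM ▸ ⟨List.ofFn f, List.length_ofFn, rfl⟩⟩
    exact List.ofFn_injective (eq_of_append_reverse_mem_palLang List.length_ofFn (hM ▸ h))
  simpa [Nat.card_fun] using
    M.natCard_le_of_fooling (fun f => List.ofFn f) (fun f => (List.ofFn f).reverse)
      (fun f => (hpal f f).mpr rfl) (fun f g h _ => (hpal f g).mp h)

theorem stmt7_general (k ℓ : ℕ) (hk : 2 ≤ k)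
    {α : Type} [Fintype α] (hcard : Fintype.card α = k) :
    (∀ L : Language α, (∀ w ∈ L, w.length = ℓ) →
      nsc L ≤ 2 * ((k ^ ((ℓ + 1) / 2 + 1) - 1) / (k - 1))) ∧
    (ℓ % 2 = 0 → ∀ (σ : Type) [Fintype σ] (M : NFA α σ),
      M.accepts = palLang α (ℓ / 2) → k ^ (ℓ / 2) ≤ Fintype.card σ) := by
  subst hcard
  rw [← Nat.card_eq_fintype_card] at hk ⊢
  rw [← Nat.geomSum_eq hk]
  refine ⟨fun L hL => nsc_le_of_forall_length_le L _ fun w hw => ?_, fun _ σ _ M hM => ?_⟩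
  · rw [hL w hw]
    omega
  · simpa only [Nat.card_eq_fintype_card] using pow_natCard_le_of_accepts_eq_palLang _ M hM

theorem stmt7 (k ℓ : ℕ) (hk : 2 ≤ k) (hℓ : 0 < ℓ)
    {α : Type} [Fintype α] (hcard : Fintype.card α = k) :
    (∀ L : Language α, (∀ w ∈ L, w.length = ℓ) →
      nsc L ≤ 2 * ((k ^ ((ℓ + 1) / 2 + 1) - 1) / (k - 1))) ∧
    (ℓ % 2 = 0 → ∀ (σ : Type) [Fintype σ] (M : NFA α σ),
      M.accepts = palLang α (ℓ / 2) → k ^ (ℓ / 2) ≤ Fintype.card σ) :=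
  stmt7_general k ℓ hk hcard
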